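/- arXiv:0707.3682 — 3 statements merged into one kernel-verified Lean document; each statement's English description precedes it below -/
import Mathlib

section
/- Let k be a finite Galois extension of ℚ with Galois group G, let E be a field of characteristic zero, let π be an idempotent of E[G], and let φ_∞ : k → ℂ be a field embedding. Consider the E-bilinear pairing E[G]π × π(E ⊗_ℚ k) → E ⊗_ℚ ℂ determined by (e·σ, e′ ⊗ a) ↦ (e·e′) ⊗ φ_∞(σ(a)) for e, e′ ∈ E, σ ∈ G, a ∈ k. Then for any choice of (finite) E-bases of E[G]π and of π(E ⊗_ℚ k) (these spaces have the same E-dimension), the square matrix of pairing values has determinant a unit of the ring E ⊗_ℚ ℂ. -/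
/-!
Write `G = Gal(k/ℚ)`. The pairing is `(x, v) ↦ φ(x • v)`, where `E[G]` acts on `E ⊗ k` through `G`
and `φ` is extended `E`-linearly. In the bases `{σ}` of `E[G]` and `{1 ⊗ βⱼ}` of `E ⊗ k`, for a
`ℚ`-basis `β` of `k` indexed by `G`, its matrix is `(φ(σ βⱼ))`, which is invertible by Dedekind's
independence of the characters `φ ∘ σ`. Since `π` is idempotent, `E[G] = E[G]π ⊕ E[G](1 - π)` and
`E ⊗ k = π(E ⊗ k) ⊕ (1 - π)(E ⊗ k)`, and the mixed pairings vanish because `π(1 - π) = 0`. In bases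
adapted to these decompositions the matrix is therefore block diagonal, and since a change of bases
multiplies the determinant by a unit, the determinant of the block on `E[G]π × π(E ⊗ k)` is a unit.
-/

open scoped TensorProduct Matrix

namespace Module.Basis

variable {K M ι κ : Type*} [Ring K] [AddCommGroup M] [Module K M] {p q : Submodule K M}

noncomputable def ofIsCompl (h : IsCompl p q) (b : Basis ι K p) (c : Basis κ K q) :
    Basis (ι ⊕ κ) K M :=
  (b.prod c).map (Submodule.prodEquivOfIsCompl p q h)

theorem coe_ofIsCompl (h : IsCompl p q) (b : Basis ι K p) (c : Basis κ K q) :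
    ⇑(ofIsCompl h b c) = Sum.elim (fun i ↦ (b i : M)) (fun j ↦ (c j : M)) := by
  ext (i | j) <;> simp [ofIsCompl]

end Module.Basis

theorem Module.Basis.isUnit_det_toMatrix_map {K R M κ : Type*} [CommRing K] [CommRing R]
    [Algebra K R] [AddCommGroup M] [Module K M] [Fintype κ] [DecidableEq κ]
    (b b' : Module.Basis κ K M) : IsUnit ((b.toMatrix b').map (algebraMap K R)).det := by
  let := b.invertibleToMatrix b'
  simpa only [RingHom.map_det, RingHom.mapMatrix_apply] using
    (Matrix.isUnit_det_of_invertible (b.toMatrix b')).map (algebraMap K R)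

namespace LinearMap

section CommRing

variable {K R M N : Type*} [CommRing K] [CommRing R] [Algebra K R]
  [AddCommGroup M] [Module K M] [AddCommGroup N] [Module K N] {ι κ : Type*}

def pairingMatrix (B : M →ₗ[K] N →ₗ[K] R) (v : ι → M) (w : κ → N) : Matrix ι κ R :=
  Matrix.of fun i j ↦ B (v i) (w j)

theorem pairingMatrix_eq_toMatrix_mul {ι' κ' : Type*} [Fintype ι] [Fintype κ]
    (B : M →ₗ[K] N →ₗ[K] R) (b : Module.Basis ι K M) (c : Module.Basis κ K N)
    (v : ι' → M) (w : κ' → N) :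
    B.pairingMatrix v w = ((b.toMatrix v).map (algebraMap K R))ᵀ * B.pairingMatrix b c *
      (c.toMatrix w).map (algebraMap K R) := by
  ext i j
  conv_lhs => rw [pairingMatrix, Matrix.of_apply, ← b.sum_repr (v i), ← c.sum_repr (w j)]
  simp only [map_sum, map_smul, LinearMap.sum_apply, LinearMap.smul_apply, Matrix.mul_apply,
    Finset.sum_mul, Finset.smul_sum]
  refine Finset.sum_congr rfl fun s _ ↦ Finset.sum_congr rfl fun t _ ↦ ?_
  simp only [pairingMatrix, Matrix.transpose_apply, Matrix.map_apply, Module.Basis.toMatrix_apply,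
    Matrix.of_apply, Algebra.smul_def]
  ring

theorem isUnit_det_pairingMatrix_of_isUnit_det [Nontrivial K] {κ' : Type*}
    [Fintype κ] [DecidableEq κ] [Fintype κ'] [DecidableEq κ'] (B : M →ₗ[K] N →ₗ[K] R)
    {b : Module.Basis κ K M} {c : Module.Basis κ K N} (h : IsUnit (B.pairingMatrix b c).det)
    (b' : Module.Basis κ' K M) (c' : Module.Basis κ' K N) :
    IsUnit (B.pairingMatrix b' c').det := by
  let e := b'.indexEquiv b
  have hdet : (B.pairingMatrix b' c').det =
      (B.pairingMatrix (b'.reindex e) (c'.reindex e)).det := by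
    rw [← Matrix.det_submatrix_equiv_self e.symm]
    congr 1
    ext
    simp [pairingMatrix]
  rw [hdet, B.pairingMatrix_eq_toMatrix_mul b c, Matrix.det_mul, Matrix.det_mul,
    Matrix.det_transpose]
  exact ((b.isUnit_det_toMatrix_map _).mul h).mul (c.isUnit_det_toMatrix_map _)

theorem pairingMatrix_sumElim {ι' κ' : Type*} (B : M →ₗ[K] N →ₗ[K] R)
    (v : ι → M) (v' : ι' → M) (w : κ → N) (w' : κ' → N)
    (h : ∀ i j, B (v i) (w' j) = 0) (h' : ∀ i j, B (v' i) (w j) = 0) :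
    B.pairingMatrix (Sum.elim v v') (Sum.elim w w') =
      Matrix.fromBlocks (B.pairingMatrix v w) 0 0 (B.pairingMatrix v' w') := by
  ext (i | i) (j | j) <;> simp [pairingMatrix, h, h']

end CommRing

variable {K R M N : Type*} [Field K] [CommRing R] [Algebra K R]
  [AddCommGroup M] [Module K M] [AddCommGroup N] [Module K N]
  {ι κ : Type*} [Fintype ι] [DecidableEq ι] [Fintype κ] [DecidableEq κ]

theorem isUnit_det_pairingMatrix_of_isCompl (B : M →ₗ[K] N →ₗ[K] R)
    {W₁ W₁' : Submodule K M} {W₂ W₂' : Submodule K N} (h₁ : IsCompl W₁ W₁')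
    (h₂ : IsCompl W₂ W₂') (hB₁ : ∀ x ∈ W₁, ∀ y ∈ W₂', B x y = 0)
    (hB₂ : ∀ x ∈ W₁', ∀ y ∈ W₂, B x y = 0)
    {b : Module.Basis κ K M} {c : Module.Basis κ K N} (h : IsUnit (B.pairingMatrix b c).det)
    (b₁ : Module.Basis ι K W₁) (b₂ : Module.Basis ι K W₂) :
    IsUnit (B.pairingMatrix (fun i ↦ (b₁ i : M)) (fun j ↦ (b₂ j : N))).det := by
  have : FiniteDimensional K M := .of_basis b
  have : FiniteDimensional K N := .of_basis c
  have hdim : Module.finrank K W₂' = Module.finrank K W₁' := by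
    have := Submodule.finrank_add_eq_of_isCompl h₁
    have := Submodule.finrank_add_eq_of_isCompl h₂
    have := Module.finrank_eq_card_basis b
    have := Module.finrank_eq_card_basis c
    have := Module.finrank_eq_card_basis b₁
    have := Module.finrank_eq_card_basis b₂
    omega
  have hblock := B.isUnit_det_pairingMatrix_of_isUnit_det h
    (b₁.ofIsCompl h₁ (Module.finBasis K W₁'))
    (b₂.ofIsCompl h₂ (Module.finBasisOfFinrankEq K W₂' hdim))
  rw [Module.Basis.coe_ofIsCompl, Module.Basis.coe_ofIsCompl,
    pairingMatrix_sumElim (h := fun i j ↦ hB₁ _ (b₁ i).2 _ (Subtype.prop _))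
      (h' := fun i j ↦ hB₂ _ (Subtype.prop _) _ (b₂ j).2),
    Matrix.det_fromBlocks_zero₂₁] at hblock
  exact isUnit_of_mul_isUnit_left hblock

end LinearMap

section Idempotent

variable {K A V R : Type*} [Field K] [Ring A] [Algebra K A] [AddCommGroup V] [Module K V]
  [CommRing R] [Algebra K R] {ι κ : Type*} [Fintype ι] [DecidableEq ι] [Fintype κ] [DecidableEq κ]

open LinearMap in
theorem isUnit_det_pairingMatrix_range_mulRight (ρ : A →ₐ[K] Module.End K V) (T : V →ₗ[K] R)
    {π : A} (hπ : IsIdempotentElem π) {b : Module.Basis κ K A} {c : Module.Basis κ K V}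
    (h : IsUnit ((ρ.toLinearMap.compr₂ T).pairingMatrix b c).det)
    (b₁ : Module.Basis ι K (range (mulRight K π))) (b₂ : Module.Basis ι K (range (ρ π))) :
    IsUnit ((ρ.toLinearMap.compr₂ T).pairingMatrix (fun i ↦ (b₁ i : A))
      (fun j ↦ (b₂ j : V))).det := by
  have hmulRight : IsIdempotentElem (mulRight K π) := by
    rw [IsIdempotentElem, Module.End.mul_eq_comp, ← mulRight_mul, hπ.eq]
  refine isUnit_det_pairingMatrix_of_isCompl _ hmulRight.isCompl (hπ.map ρ).isCompl ?_ ?_ h b₁ b₂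
  · rintro _ ⟨y, rfl⟩ v (hv : ρ π v = 0)
    simp [map_mul, hv]
  · rintro x (hx : x * π = 0) _ ⟨w, rfl⟩
    simp [← Module.End.mul_apply, ← map_mul, hx]

end Idempotent

theorem isUnit_det_algHom_apply_basis {F k L κ : Type*} [CommRing F] [Ring k] [Algebra F k]
    [Field L] [Algebra F L] [Fintype κ] [DecidableEq κ]
    {f : κ → (k →ₐ[F] L)} (hf : Function.Injective f) (β : Module.Basis κ F k) :
    IsUnit (Matrix.of fun i j ↦ f i (β j)).det := by
  rw [← Matrix.isUnit_iff_isUnit_det, ← Matrix.linearIndependent_rows_iff_isUnit]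
  exact ((linearIndependent_algHom_toLinearMap F k L).comp f hf).map'
    (β.constr L).symm.toLinearMap (LinearEquiv.ker _)

section Galois

variable (F k E : Type*) [CommRing F] [Ring k] [Algebra F k] [CommRing E] [Algebra F E]

noncomputable def galoisAction : MonoidAlgebra E (k ≃ₐ[F] k) →ₐ[E] Module.End E (E ⊗[F] k) :=
  MonoidAlgebra.lift E _ _
    ((Module.End.baseChangeHom F E k : Module.End F k →* _).comp (AlgEquiv.toLinearMapHom F k))

theorem galoisAction_apply (x : MonoidAlgebra E (k ≃ₐ[F] k)) :
    galoisAction F k E x = x.coeff.sum fun σ a ↦ a • (σ.toLinearMap : k →ₗ[F] k).baseChange E :=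
  MonoidAlgebra.lift_apply _ _

theorem galoisAction_single (σ : k ≃ₐ[F] k) (c : E) :
    galoisAction F k E (MonoidAlgebra.single σ c) = c • (σ.toLinearMap : k →ₗ[F] k).baseChange E :=
  MonoidAlgebra.lift_single _ _ _

variable {F k E} {L : Type*} [CommRing L] [Algebra F L]

noncomputable def galoisPairing (φ : k →ₐ[F] L) :
    MonoidAlgebra E (k ≃ₐ[F] k) →ₗ[E] E ⊗[F] k →ₗ[E] E ⊗[F] L :=
  (galoisAction F k E).toLinearMap.compr₂ (φ.toLinearMap.baseChange E)

theorem galoisPairing_apply (φ : k →ₐ[F] L) (x : MonoidAlgebra E (k ≃ₐ[F] k)) (v : E ⊗[F] k) :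
    galoisPairing φ x v = x.coeff.sum fun σ c ↦
      (c ⊗ₜ[F] (1 : L)) * (φ.comp σ.toAlgHom).toLinearMap.baseChange E v := by
  rw [galoisPairing, LinearMap.compr₂_apply, AlgHom.toLinearMap_apply, galoisAction_apply,
    Finsupp.sum, Finsupp.sum, LinearMap.sum_apply, map_sum]
  refine Finset.sum_congr rfl fun σ _ ↦ ?_
  rw [LinearMap.smul_apply, map_smul, Algebra.smul_def, Algebra.TensorProduct.algebraMap_apply,
    Algebra.algebraMap_self_apply, ← LinearMap.comp_apply, ← LinearMap.baseChange_comp]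
  rfl

end Galois

theorem isUnit_det_galoisPairing_basis {F k E L : Type*} [CommRing F] [Field k] [Algebra F k]
    [CommRing E] [Algebra F E] [Field L] [Algebra F L]
    [Fintype (k ≃ₐ[F] k)] [DecidableEq (k ≃ₐ[F] k)]
    (φ : k →ₐ[F] L) (β : Module.Basis (k ≃ₐ[F] k) F k) :
    IsUnit ((galoisPairing (E := E) φ).pairingMatrix (MonoidAlgebra.basis _ E)
      (β.baseChange E)).det := by
  have hφσ : Function.Injective fun σ : k ≃ₐ[F] k ↦ φ.comp σ.toAlgHom := fun σ τ h ↦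
    AlgEquiv.ext fun a ↦ φ.injective (DFunLike.congr_fun h a)
  have hmatrix : (galoisPairing (E := E) φ).pairingMatrix (MonoidAlgebra.basis _ E)
      (β.baseChange E) = (Algebra.TensorProduct.includeRight : L →ₐ[F] E ⊗[F] L).mapMatrix
        (Matrix.of fun σ τ ↦ φ.comp σ.toAlgHom (β τ)) := by
    ext σ τ
    simp [LinearMap.pairingMatrix, galoisPairing, galoisAction_single]
  rw [hmatrix, ← AlgHom.map_det]
  exact (isUnit_det_algHom_apply_basis hφσ β).map _

/-- Let `k/ℚ` be finite Galois with group `G`, `E` a field of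
characteristic zero, `π` an idempotent of `E[G]`, and `φ∞ : k → ℂ` an embedding.
The `E`-bilinear pairing `E[G]π × π(E ⊗[ℚ] k) → E ⊗[ℚ] ℂ` determined by
`(e·σ, e′ ⊗ a) ↦ (e·e′) ⊗ φ∞(σ(a))` has, with respect to any `E`-bases of
`E[G]π` and of `π(E ⊗[ℚ] k)` (indexed by a common finite type, the two spaces
having the same `E`-dimension), a matrix of pairing values whose determinant is
a unit of the ring `E ⊗[ℚ] ℂ`. -/
theorem det_pairing_isUnit
    (k : Type) [Field k] [NumberField k] [IsGalois ℚ k]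
    (E : Type) [Field E] [CharZero E]
    (π : MonoidAlgebra E (k ≃ₐ[ℚ] k)) (hπ : π * π = π)
    (φ : k →ₐ[ℚ] ℂ)
    (ι : Type) [Fintype ι] [DecidableEq ι]
    (b₁ : Module.Basis ι E ↥(LinearMap.range (LinearMap.mulRight E π)))
    (b₂ : Module.Basis ι E ↥(LinearMap.range
      (π.coeff.sum fun σ a => a • LinearMap.baseChange E (σ.toLinearMap : k →ₗ[ℚ] k)))) :
    IsUnit (Matrix.det (fun i j =>
      ((b₁ i : MonoidAlgebra E (k ≃ₐ[ℚ] k)).coeff.sum fun σ c =>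
        (c ⊗ₜ[ℚ] (1 : ℂ)) *
          LinearMap.baseChange E ((φ.comp σ.toAlgHom).toLinearMap)
            (b₂ j : E ⊗[ℚ] k)) : Matrix ι ι (E ⊗[ℚ] ℂ))) := by
  classical
  have hcard : Module.finrank ℚ k = Fintype.card (k ≃ₐ[ℚ] k) := by
    rw [← IsGalois.card_aut_eq_finrank, Nat.card_eq_fintype_card]
  let β := (Module.finBasisOfFinrankEq ℚ k hcard).reindex (Fintype.equivFin _).symm
  simp only [← galoisPairing_apply]
  exact isUnit_det_pairingMatrix_range_mulRight (galoisAction ℚ k E) _ hπ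
    (isUnit_det_galoisPairing_basis φ β) b₁ b₂
end

section
/- Let k be a number field that is Galois over ℚ, let E be a field of characteristic zero, let V be a nonzero finite-dimensional E-vector space, and let ρ : Gal(k/ℚ) → GL(V) be a representation. Suppose that for every field embedding σ : k → ℂ, the automorphism φ_σ ∈ Gal(k/ℚ) determined by σ ∘ φ_σ = (complex conjugation on ℂ) ∘ σ satisfies ρ(φ_σ) = −id_V. Then the fixed field of the kernel of ρ is a CM field, i.e., a totally imaginary quadratic extension of a totally real number field. -/
/-!
All complex conjugations `φ_σ` have the same image under `ρ`, so they restrict to a single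
automorphism `c` of `F = k^{ker ρ}`, and `c ≠ 1` because `ρ(φ_σ) = -1 ≠ 1`. Thus `c` is the
complex conjugation of every embedding of `F`: no embedding of `F` is real, the fixed field
`F₀` of `⟨c⟩` is totally real, and `[F : F₀] = orderOf c = 2`.
-/

open NumberField ComplexEmbedding IntermediateField

theorem Module.End.units_neg_one_ne_one (E V : Type*) [Field E] [CharZero E] [AddCommGroup V]
    [Module E V] [Nontrivial V] : (-1 : (Module.End E V)ˣ) ≠ 1 := by
  have := charZero_of_injective_algebraMap (algebraMap E (Module.End E V)).injective
  rw [Ne, Units.ext_iff]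
  exact Ring.neg_one_ne_one_of_char_ne_two (by simp)

namespace NumberField.ComplexEmbedding

theorem exists_comp_algebraMap_eq {K L : Type*} [Field K] [Field L] [Algebra K L]
    [Algebra.IsAlgebraic K L] (ψ : K →+* ℂ) : ∃ φ : L →+* ℂ, φ.comp (algebraMap K L) = ψ :=
  letI := ψ.toAlgebra
  ⟨(IsAlgClosed.lift : L →ₐ[K] ℂ).toRingHom, RingHom.ext (IsAlgClosed.lift : L →ₐ[K] ℂ).commutes⟩

variable {K : Type*} [Field K]

theorem exists_isConj [Algebra ℚ K] [Normal ℚ K] (φ : K →+* ℂ) : ∃ σ : Gal(K/ℚ), IsConj φ σ := by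
  let := φ.toAlgebra
  have : IsScalarTower ℚ K ℂ := IsScalarTower.of_algebraMap_eq' (Subsingleton.elim _ _)
  refine ⟨(Complex.conjAe.restrictScalars ℚ).restrictNormal K, RingHom.ext fun x => ?_⟩
  exact (AlgEquiv.restrictNormal_commutes (Complex.conjAe.restrictScalars ℚ) K x).symm

theorem IsConj.restrictNormal {k : Type*} [Field k] [Algebra k K] {φ : K →+* ℂ} {σ : Gal(K/k)}
    (h : IsConj φ σ) (F : IntermediateField k K) [Normal k F] :
    IsConj (φ.comp (algebraMap F K)) (AlgEquiv.restrictNormalHom F σ) :=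
  RingHom.ext fun x => by
    simp [AlgEquiv.restrictNormalHom_apply, h.eq, conjugate_coe_eq]

theorem exists_im_ne_zero_of_not_isReal {φ : K →+* ℂ} (h : ¬IsReal φ) : ∃ x, (φ x).im ≠ 0 := by
  contrapose! h
  exact isReal_iff.mpr (RingHom.ext fun x => Complex.conj_eq_iff_im.mpr (h x))

theorem IsConj.im_eq_zero {k : Type*} [Field k] [Algebra k K] {φ : K →+* ℂ} {σ : Gal(K/k)}
    (h : IsConj φ σ) {x : K} (hx : σ x = x) : (φ x).im = 0 := by
  rw [← Complex.conj_eq_iff_im, starRingEnd_apply, ← h.eq, hx]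

variable {k : Type*} [Field k] [Algebra k K] [FiniteDimensional k K] {σ : Gal(K/k)}

theorem im_eq_zero_of_forall_isConj (hσ : ∀ φ : K →+* ℂ, IsConj φ σ)
    (τ : fixedField (Subgroup.zpowers σ) →+* ℂ) (x : fixedField (Subgroup.zpowers σ)) :
    (τ x).im = 0 := by
  obtain ⟨φ, rfl⟩ := exists_comp_algebraMap_eq (L := K) τ
  exact (hσ φ).im_eq_zero (x.2 ⟨σ, Subgroup.mem_zpowers σ⟩)

theorem finrank_fixedField_zpowers_eq_two {φ : K →+* ℂ} (hσ : IsConj φ σ) (hσ₁ : σ ≠ 1) :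
    Module.finrank (fixedField (Subgroup.zpowers σ)) K = 2 := by
  rw [finrank_fixedField_eq_card, Nat.card_zpowers, orderOf_isConj_two_of_ne_one hσ hσ₁]

end NumberField.ComplexEmbedding

theorem AlgEquiv.restrictNormalHom_fixedField_ker_eq_iff {k K G : Type*} [Field k] [Field K]
    [Algebra k K] [FiniteDimensional k K] [IsGalois k K] [Group G] (ρ : Gal(K/k) →* G)
    {g h : Gal(K/k)} :
    restrictNormalHom (fixedField ρ.ker) g = restrictNormalHom (fixedField ρ.ker) h ↔
      ρ g = ρ h := by
  rw [MonoidHom.eq_iff, MonoidHom.eq_iff, restrictNormalHom_ker, fixingSubgroup_fixedField]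

theorem fixedField_ker_CM_general
    (k : Type) [Field k] [NumberField k] [IsGalois ℚ k]
    (E : Type) [Field E] [CharZero E]
    (V : Type) [AddCommGroup V] [Module E V] [Nontrivial V]
    (ρ : (k ≃ₐ[ℚ] k) →* (Module.End E V)ˣ)
    (hρ : ∀ (σ : k →+* ℂ) (φσ : k ≃ₐ[ℚ] k),
      (∀ x : k, σ (φσ x) = starRingEnd ℂ (σ x)) → ρ φσ = -1)
    (F : IntermediateField ℚ k) (hF : F = IntermediateField.fixedField ρ.ker) :
    NumberField ↥F ∧
      (∀ τ : ↥F →+* ℂ, ∃ x : ↥F, (τ x).im ≠ 0) ∧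
      ∃ F₀ : IntermediateField ℚ ↥F,
        (∀ (τ₀ : ↥F₀ →+* ℂ) (x : ↥F₀), (τ₀ x).im = 0) ∧
        Module.finrank ↥F₀ ↥F = 2 := by
  subst hF
  have : IsGalois ℚ (fixedField ρ.ker) := IsGalois.of_fixedField_normal_subgroup ρ.ker
  set res : Gal(k/ℚ) →* Gal(fixedField ρ.ker/ℚ) := AlgEquiv.restrictNormalHom _
  obtain ⟨σ₀⟩ : Nonempty (k →+* ℂ) := inferInstance
  obtain ⟨φ₀, hφ₀⟩ := exists_isConj σ₀
  have hconj (τ : fixedField ρ.ker →+* ℂ) : IsConj τ (res φ₀) := by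
    obtain ⟨σ, rfl⟩ := exists_comp_algebraMap_eq (L := k) τ
    obtain ⟨φ, hφ⟩ := exists_isConj σ
    have : res φ = res φ₀ := (AlgEquiv.restrictNormalHom_fixedField_ker_eq_iff ρ).2
      ((hρ _ _ hφ.eq).trans (hρ _ _ hφ₀.eq).symm)
    exact this ▸ hφ.restrictNormal _
  have hne : res φ₀ ≠ 1 := by
    rw [← map_one res]
    refine (AlgEquiv.restrictNormalHom_fixedField_ker_eq_iff ρ).not.mpr ?_
    rw [map_one, hρ _ _ hφ₀.eq]
    exact Module.End.units_neg_one_ne_one E V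
  obtain ⟨τ⟩ : Nonempty (fixedField ρ.ker →+* ℂ) := inferInstance
  exact ⟨inferInstance,
    fun φ => exists_im_ne_zero_of_not_isReal ((isConj_ne_one_iff (hconj φ)).mp hne),
    _, im_eq_zero_of_forall_isConj hconj, finrank_fixedField_zpowers_eq_two (hconj τ) hne⟩

/-- Let `k` be a number field Galois over `ℚ`, `E` a field of
characteristic zero, `V` a nonzero finite-dimensional `E`-vector space, and
`ρ : Gal(k/ℚ) → GL(V)` a representation. Suppose that for every embedding `σ : k → ℂ`,
the automorphism `φσ ∈ Gal(k/ℚ)` determined by `σ ∘ φσ = conj ∘ σ` satisfies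
`ρ(φσ) = −id`. Then the fixed field `F` of the kernel of `ρ` is a CM field: it is a
number field, totally imaginary (no embedding into `ℂ` has real image), and it is a
quadratic extension of a totally real subfield. -/
theorem fixedField_ker_CM
    (k : Type) [Field k] [NumberField k] [IsGalois ℚ k]
    (E : Type) [Field E] [CharZero E]
    (V : Type) [AddCommGroup V] [Module E V] [FiniteDimensional E V] [Nontrivial V]
    (ρ : (k ≃ₐ[ℚ] k) →* (Module.End E V)ˣ)
    (hρ : ∀ (σ : k →+* ℂ) (φσ : k ≃ₐ[ℚ] k),
      (∀ x : k, σ (φσ x) = starRingEnd ℂ (σ x)) → ρ φσ = -1)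
    (F : IntermediateField ℚ k) (hF : F = IntermediateField.fixedField ρ.ker) :
    NumberField ↥F ∧
      (∀ τ : ↥F →+* ℂ, ∃ x : ↥F, (τ x).im ≠ 0) ∧
      ∃ F₀ : IntermediateField ℚ ↥F,
        (∀ (τ₀ : ↥F₀ →+* ℂ) (x : ↥F₀), (τ₀ x).im = 0) ∧
        Module.finrank ↥F₀ ↥F = 2 :=
  fixedField_ker_CM_general k E V ρ hρ F hF
end

section
/- Let N > 1 be an integer, χ a primitive Dirichlet character modulo N with values in ℂ, n ≥ 2 an integer, and η = exp(2πi/N). Then Σ_{a=0}^{N−1} χ̄(a)·Li_n(η^a) = (Σ_{a=0}^{N−1} χ̄(a)·η^a) · L(χ, n), where χ̄ denotes the conjugate character a ↦ conj(χ(a)), Li_n(z) = Σ_{k≥1} z^k / k^n, and L(χ, n) = Σ_{k≥1} χ(k) / k^n. -/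
/-!
Expand each `Li_n(η^a)` as its power series and exchange the finite sum over `a` with the
absolutely convergent sum over `k`. The coefficient of `(k+1)^{-n}` is then the Gauss sum of `χ̄`
against the additive character `a ↦ η^{(k+1)a}`, and for primitive `χ` this twisted Gauss sum is
`χ(k+1)` times the untwisted one (both sides vanish when `gcd(k+1, N) > 1`).
-/

noncomputable section

/-- The polylogarithm `Li_n(z) = Σ_{k≥1} z^k / k^n`, as a `tsum` (which converges for
`|z| ≤ 1`, `z ≠ 1`, and all `n ≥ 2`, as well as for `z = 1` and `n ≥ 2`). -/
def Li (n : ℕ) (z : ℂ) : ℂ :=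
  ∑' k : ℕ, z ^ (k + 1) / ((k : ℂ) + 1) ^ n

open Finset Complex Real

theorem ZMod.sum_range_natCast {N : ℕ} [NeZero N] {M : Type*} [AddCommMonoid M]
    (f : ZMod N → M) : ∑ a ∈ range N, f a = ∑ a : ZMod N, f a :=
  sum_nbij' (↑) ZMod.val (fun _ _ ↦ mem_univ _) (fun a _ ↦ mem_range.2 a.val_lt)
    (fun _ ha ↦ ZMod.val_cast_of_lt (mem_range.1 ha)) (fun a _ ↦ ZMod.natCast_zmod_val a)
    fun _ _ ↦ rfl

theorem DirichletCharacter.IsPrimitive.inv {R : Type*} [CommMonoidWithZero R] {N : ℕ}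
    {χ : DirichletCharacter R N} (hχ : χ.IsPrimitive) : χ⁻¹.IsPrimitive :=
  (conductor_inv χ).trans hχ

theorem exp_two_pi_I_div_pow_eq_stdAddChar {N : ℕ} [NeZero N] (m : ℕ) :
    exp (2 * π * I / N) ^ m = ZMod.stdAddChar (m : ZMod N) := by
  rw [ZMod.stdAddChar_apply, ZMod.toCircle_natCast, ← Complex.exp_nat_mul]
  ring_nf

theorem summable_pow_succ_div_succ_pow {z : ℂ} (hz : ‖z‖ ≤ 1) {n : ℕ} (hn : 2 ≤ n) :
    Summable fun k : ℕ ↦ z ^ (k + 1) / ((k : ℂ) + 1) ^ n := by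
  have hsum : Summable fun k : ℕ ↦ 1 / ((k : ℝ) + 1) ^ n := by
    simpa using (summable_nat_add_iff 1).2 (Real.summable_one_div_nat_pow.2 (by omega : 1 < n))
  refine Summable.of_norm_bounded hsum fun k ↦ ?_
  rw [norm_div, norm_pow, norm_pow]
  gcongr
  · exact pow_le_one₀ (norm_nonneg z) hz
  · norm_cast

theorem sum_mul_Li_eq_tsum {ι : Type*} (s : Finset ι) (c z : ι → ℂ) (hz : ∀ a ∈ s, ‖z a‖ ≤ 1)
    {n : ℕ} (hn : 2 ≤ n) :
    ∑ a ∈ s, c a * Li n (z a) = ∑' k : ℕ, (∑ a ∈ s, c a * z a ^ (k + 1)) / ((k : ℂ) + 1) ^ n := by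
  simp_rw [Li, ← tsum_mul_left, sum_div, mul_div_assoc]
  exact (Summable.tsum_finsetSum fun a ha ↦
    (summable_pow_succ_div_succ_pow (hz a ha) hn).mul_left _).symm

theorem sum_range_conj_mul_exp_pow_pow_eq_gaussSum {N : ℕ} [NeZero N]
    (χ : DirichletCharacter ℂ N) (m : ℕ) :
    ∑ a ∈ range N, starRingEnd ℂ (χ a) * (exp (2 * π * I / N) ^ a) ^ m =
      gaussSum χ⁻¹ (ZMod.stdAddChar.mulShift m) := by
  simp_rw [← pow_mul, exp_two_pi_I_div_pow_eq_stdAddChar, ← RCLike.star_def,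
    MulChar.star_apply']
  push_cast
  rw [gaussSum, ← ZMod.sum_range_natCast]
  simp_rw [AddChar.mulShift_apply, mul_comm]

/-- Let `N > 1`, `χ` a primitive Dirichlet character mod `N` with
values in `ℂ`, `n ≥ 2`, and `η = exp(2πi/N)`. Then
`Σ_{a=0}^{N−1} χ̄(a)·Li_n(η^a) = (Σ_{a=0}^{N−1} χ̄(a)·η^a) · L(χ, n)`,
where `χ̄(a) = conj (χ a)` and `L(χ, n) = Σ_{k≥1} χ(k)/k^n`. -/
theorem dirichlet_polylog_gauss_sum
    (N : ℕ) (hN : 1 < N) (χ : DirichletCharacter ℂ N) (hχ : χ.IsPrimitive)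
    (n : ℕ) (hn : 2 ≤ n)
    (η : ℂ) (hη : η = Complex.exp (2 * Real.pi * Complex.I / N)) :
    ∑ a ∈ Finset.range N, starRingEnd ℂ (χ (a : ZMod N)) * Li n (η ^ a) =
      (∑ a ∈ Finset.range N, starRingEnd ℂ (χ (a : ZMod N)) * η ^ a) *
        ∑' k : ℕ, χ ((k + 1 : ℕ) : ZMod N) / ((k : ℂ) + 1) ^ n := by
  have : NeZero N := ⟨by omega⟩
  have hnorm (a : ℕ) : ‖η ^ a‖ = 1 := by
    rw [hη, exp_two_pi_I_div_pow_eq_stdAddChar, ZMod.stdAddChar_apply, Circle.norm_coe]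
  have hgauss (m : ℕ) : ∑ a ∈ range N, starRingEnd ℂ (χ a) * (η ^ a) ^ m =
      gaussSum χ⁻¹ (ZMod.stdAddChar.mulShift m) :=
    hη ▸ sum_range_conj_mul_exp_pow_pow_eq_gaussSum χ m
  have hgauss_one := hgauss 1
  simp only [pow_one, Nat.cast_one, AddChar.mulShift_one] at hgauss_one
  rw [sum_mul_Li_eq_tsum _ _ _ (fun a _ ↦ (hnorm a).le) hn, hgauss_one, ← tsum_mul_left]
  refine tsum_congr fun k ↦ ?_
  rw [hgauss, gaussSum_mulShift_of_isPrimitive _ hχ.inv, inv_inv]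
  ring

end
end
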